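/- arXiv:1810.10390 — 2 statements merged into one kernel-verified Lean document; each statement's English description precedes it below -/
import Mathlib

section
/- Let h > 0 and let β be a nonzero real number with cos(hβ) ≠ 1. Define a = β·sin(hβ)/(1 − cos(hβ)) and b = −β²·cos(hβ)/(1 − cos(hβ)). Then ω = iβ is a root of the characteristic equation, i.e., iβ + a·e^{−i h β} + (b/(iβ))·(1 − e^{−i h β}) = 0, where e denotes the complex exponential. -/
/-! Write `θ = hβ` and `z = e^{-iθ}`. Multiplying the characteristic equation at `ω = iβ` by
`iβ (1 - cos θ) / β²` turns it into `(cos θ + i sin θ) z = 1`, which is `e^{iθ} e^{-iθ} = 1`. -/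

namespace Complex

theorem cos_add_sin_mul_I_mul_exp_neg_mul_I (θ : ℂ) :
    (cos θ + sin θ * I) * exp (-θ * I) = 1 := by
  rw [← exp_mul_I, ← exp_add]
  simp

theorem I_mul_add_mul_add_div_I_mul_mul_eq_zero {β c s z : ℂ} (hc : 1 - c ≠ 0)
    (hz : (c + s * I) * z = 1) :
    I * β + β * s / (1 - c) * z + -(β ^ 2 * c) / (1 - c) / (I * β) * (1 - z) = 0 := by
  rcases eq_or_ne β 0 with rfl | hβ
  · simp -- every term vanishes, the last one because `x / 0 = 0`
  field_simp
  linear_combination β * hz + β * (1 - c) * I_sq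

end Complex

open Complex in
theorem imaginary_root_of_characteristic_equation_general
    (h β : ℝ) (hcos : Real.cos (h * β) ≠ 1)
    (a b : ℝ)
    (ha : a = β * Real.sin (h * β) / (1 - Real.cos (h * β)))
    (hb : b = -(β ^ 2 * Real.cos (h * β)) / (1 - Real.cos (h * β))) :
    I * (β : ℂ) + (a : ℂ) * Complex.exp (-(h : ℂ) * (I * (β : ℂ)))
      + ((b : ℂ) / (I * (β : ℂ))) * (1 - Complex.exp (-(h : ℂ) * (I * (β : ℂ)))) = 0 := by
  have hc : 1 - cos (h * β) ≠ 0 := by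
    exact_mod_cast sub_ne_zero.mpr (Ne.symm hcos)
  have hexp : -(h : ℂ) * (I * β) = -(h * β) * I := by ring
  subst ha hb
  push_cast
  rw [hexp]
  exact I_mul_add_mul_add_div_I_mul_mul_eq_zero hc (cos_add_sin_mul_I_mul_exp_neg_mul_I _)

open Complex in
theorem imaginary_root_of_characteristic_equation
    (h β : ℝ) (hh : 0 < h) (hβ : β ≠ 0) (hcos : Real.cos (h * β) ≠ 1)
    (a b : ℝ)
    (ha : a = β * Real.sin (h * β) / (1 - Real.cos (h * β)))
    (hb : b = -(β ^ 2 * Real.cos (h * β)) / (1 - Real.cos (h * β))) :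
    I * (β : ℂ) + (a : ℂ) * Complex.exp (-(h : ℂ) * (I * (β : ℂ)))
      + ((b : ℂ) / (I * (β : ℂ))) * (1 - Complex.exp (-(h : ℂ) * (I * (β : ℂ)))) = 0 :=
  imaginary_root_of_characteristic_equation_general h β hcos a b ha hb
end

section
/- Let h > 0, p ≥ 0, and a, b ∈ ℝ with a + b·h > 0. Set J = 2·∫_0^h |a + b·u| du + 2p/(a + b·h). Then: (i) if a ≥ 0, J < 2 if and only if p < (a + b·h)·(1 − a·h − b·h²/2); (ii) if a < 0 (so b > 0), J < 2 if and only if p < (a + b·h)·(1 − a·h − b·h²/2 − a²/b). -/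
/-!
For `a ≥ 0` the affine function `a + b u` is nonnegative on `[0, h]`, so
`∫₀ʰ |a + b u| du = a h + b h² / 2`. For `a < 0 < a + b h` it changes sign exactly once, at
`u₀ = -a / b`, and integrating the two pieces of constant sign separately gives
`a h + b h² / 2 + a² / b`. Since `a + b h > 0`, the condition `J < 2` is then linear in `p`.
-/

open Set intervalIntegral

lemma integral_affine (a b x y : ℝ) :
    ∫ u in x..y, (a + b * u) = a * (y - x) + b * (y ^ 2 - x ^ 2) / 2 := by
  rw [integral_add intervalIntegrable_const (intervalIntegrable_id.const_mul b),
    integral_const, integral_const_mul, integral_id, smul_eq_mul]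
  ring

lemma integral_abs_of_nonneg_on {f : ℝ → ℝ} {x y : ℝ} (hf : ∀ u ∈ uIcc x y, 0 ≤ f u) :
    ∫ u in x..y, |f u| = ∫ u in x..y, f u :=
  integral_congr fun u hu => abs_of_nonneg (hf u hu)

lemma integral_abs_of_nonpos_on {f : ℝ → ℝ} {x y : ℝ} (hf : ∀ u ∈ uIcc x y, f u ≤ 0) :
    ∫ u in x..y, |f u| = -∫ u in x..y, f u := by
  rw [← integral_neg]
  exact integral_congr fun u hu => abs_of_nonpos (hf u hu)

lemma integral_abs_affine_of_nonneg {a b h : ℝ} (hh : 0 < h) (ha : 0 ≤ a) (hab : 0 ≤ a + b * h) :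
    ∫ u in (0:ℝ)..h, |a + b * u| = a * h + b * h ^ 2 / 2 := by
  rw [integral_abs_of_nonneg_on, integral_affine]
  · ring
  rintro u ⟨hu₀, hu₁⟩
  rw [inf_of_le_left hh.le] at hu₀
  rw [sup_of_le_right hh.le] at hu₁
  -- `h (a + b u) = (h - u) a + u (a + b h)`
  nlinarith [mul_nonneg (sub_nonneg.2 hu₁) ha, mul_nonneg hu₀ hab]

lemma integral_abs_affine_of_neg {a b h : ℝ} (hh : 0 < h) (ha : a < 0) (hab : 0 < a + b * h) :
    ∫ u in (0:ℝ)..h, |a + b * u| = a * h + b * h ^ 2 / 2 + a ^ 2 / b := by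
  have hb : 0 < b := by nlinarith
  set u₀ := -a / b with hu₀
  have hbu₀ : b * u₀ = -a := mul_div_cancel₀ _ hb.ne'
  have hu₀_pos : 0 < u₀ := div_pos (neg_pos.2 ha) hb
  have hu₀_lt : u₀ < h := by nlinarith
  have hcont : Continuous fun u : ℝ => |a + b * u| := by fun_prop
  rw [← integral_add_adjacent_intervals (hcont.intervalIntegrable 0 u₀)
    (hcont.intervalIntegrable u₀ h)]
  have h_left : ∫ u in (0:ℝ)..u₀, |a + b * u| = -(a * u₀ + b * u₀ ^ 2 / 2) := by
    rw [integral_abs_of_nonpos_on, integral_affine]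
    · ring
    rintro u ⟨-, hu⟩
    rw [sup_of_le_right hu₀_pos.le] at hu
    nlinarith
  have h_right : ∫ u in u₀..h, |a + b * u| = a * (h - u₀) + b * (h ^ 2 - u₀ ^ 2) / 2 := by
    rw [integral_abs_of_nonneg_on, integral_affine]
    rintro u ⟨hu, -⟩
    rw [inf_of_le_left hu₀_lt.le] at hu
    nlinarith
  rw [h_left, h_right, hu₀]
  field_simp
  ring

lemma two_mul_add_two_mul_div_lt_two_iff {I p c : ℝ} (hc : 0 < c) :
    2 * I + 2 * p / c < 2 ↔ p < c * (1 - I) := by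
  rw [← lt_sub_iff_add_lt', div_lt_iff₀ hc]
  constructor <;> intro H <;> linarith

theorem condition_4_8_piecewise_general
    (h p a b : ℝ) (hh : 0 < h) (hab : 0 < a + b * h)
    (J : ℝ)
    (hJ : J = 2 * (∫ u in (0:ℝ)..h, |a + b * u|) + 2 * p / (a + b * h)) :
    (0 ≤ a → (J < 2 ↔ p < (a + b * h) * (1 - a * h - b * h ^ 2 / 2))) ∧
    (a < 0 → (J < 2 ↔ p < (a + b * h) * (1 - a * h - b * h ^ 2 / 2 - a ^ 2 / b))) := by
  rw [hJ]
  refine ⟨fun ha => ?_, fun ha => ?_⟩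
  · rw [integral_abs_affine_of_nonneg hh ha hab.le, two_mul_add_two_mul_div_lt_two_iff hab,
      sub_add_eq_sub_sub]
  · rw [integral_abs_affine_of_neg hh ha hab, two_mul_add_two_mul_div_lt_two_iff hab,
      sub_add_eq_sub_sub, sub_add_eq_sub_sub]

theorem condition_4_8_piecewise
    (h p a b : ℝ) (hh : 0 < h) (hp : 0 ≤ p) (hab : 0 < a + b * h)
    (J : ℝ)
    (hJ : J = 2 * (∫ u in (0:ℝ)..h, |a + b * u|) + 2 * p / (a + b * h)) :
    (0 ≤ a → (J < 2 ↔ p < (a + b * h) * (1 - a * h - b * h ^ 2 / 2))) ∧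
    (a < 0 → (J < 2 ↔ p < (a + b * h) * (1 - a * h - b * h ^ 2 / 2 - a ^ 2 / b))) :=
  condition_4_8_piecewise_general h p a b hh hab J hJ
end
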